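/- Fix k ≥ 2 and qubits indexed by Fin k. For 0 < q < 1 and distinct a, b ∈ Fin k, let ℋ_{ab}(q) be the 2^k × 2^k complex matrix acting as blockdiag(0, M(q), 0) on the qubit pair (a, b) (in the basis |0_a 0_b⟩, |0_a 1_b⟩, |1_a 0_b⟩, |1_a 1_b⟩ of that pair) and as the identity on all other qubits, and let 𝒩 = ∑_{l ∈ Fin k} (I − Z_l)/2 be the number operator, where Z_l acts as Pauli-Z = diag(1, −1) on qubit l and identity elsewhere. Then ℋ_{ab}(q) · 𝒩 = 𝒩 · ℋ_{ab}(q); consequently any real linear combination ∑ c_{ab} ℋ_{ab}(q_{ab}) commutes with 𝒩 and preserves every fixed-Hamming-weight subspace of (ℂ²)^{⊗k}. -/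
import Mathlib


open Matrix

/-- The two-qubit warm-started XY-block `blockdiag(0, M(q), 0)` as a matrix
indexed by pairs of bits `(x₁, x₂)` in the ordering `|00⟩, |01⟩, |10⟩, |11⟩`:
it acts as the single-qubit warm-start mixer
`M(q) = [[1-2q, -2√(q(1-q))], [-2√(q(1-q)), 2q-1]]` on `span{|01⟩, |10⟩}`
and as zero on `|00⟩` and `|11⟩`. -/
noncomputable def xyBlock (q : ℝ) :
    Matrix (Fin 2 × Fin 2) (Fin 2 × Fin 2) ℂ := fun p r =>
  if p = (0, 1) ∧ r = (0, 1) then ((1 - 2*q : ℝ) : ℂ)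
  else if p = (0, 1) ∧ r = (1, 0) then ((-2 * Real.sqrt (q * (1 - q)) : ℝ) : ℂ)
  else if p = (1, 0) ∧ r = (0, 1) then ((-2 * Real.sqrt (q * (1 - q)) : ℝ) : ℂ)
  else if p = (1, 0) ∧ r = (1, 0) then ((2*q - 1 : ℝ) : ℂ)
  else 0

/-- The Kronecker embedding `ℋ_{ab}(q)` of the two-qubit block `xyBlock q`
acting on the qubit pair `(a, b)` of `k` qubits, identity on all other qubits:
computational basis states are functions `Fin k → Fin 2`. -/
noncomputable def embedPair (k : ℕ) (a b : Fin k) (q : ℝ) :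
    Matrix (Fin k → Fin 2) (Fin k → Fin 2) ℂ := fun x y =>
  if ∀ l, l ≠ a → l ≠ b → x l = y l then xyBlock q (x a, x b) (y a, y b) else 0

/-- Pauli-Z on qubit `l`, identity elsewhere. -/
def Zop (k : ℕ) (l : Fin k) : Matrix (Fin k → Fin 2) (Fin k → Fin 2) ℂ :=
  Matrix.diagonal (fun x => if x l = 0 then 1 else -1)

/-- The number operator `𝒩 = ∑_l (I - Z_l)/2`. -/
noncomputable def numOp (k : ℕ) : Matrix (Fin k → Fin 2) (Fin k → Fin 2) ℂ :=
  ∑ l, (2⁻¹ : ℂ) • ((1 : Matrix (Fin k → Fin 2) (Fin k → Fin 2) ℂ) - Zop k l)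

lemma numOp_eq (k : ℕ) :
    numOp k = Matrix.diagonal (fun x => ((∑ l, (x l).val : ℕ) : ℂ)) := by
  ext x y
  by_cases h : x = y
  · subst h
    simp only [numOp, Matrix.sum_apply, Matrix.smul_apply, Matrix.sub_apply, Zop,
      Matrix.one_apply_eq, Matrix.diagonal_apply_eq, smul_eq_mul, Nat.cast_sum]
    refine Finset.sum_congr rfl fun l _ => ?_
    rcases eq_or_ne (x l) 0 with h0 | h0
    · simp [h0]
    · have h1 : x l = 1 := by omega
      simp [h1]
      norm_num
  · simp only [numOp, Matrix.sum_apply, Matrix.smul_apply, Matrix.sub_apply, Zop,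
      Matrix.one_apply_ne h, Matrix.diagonal_apply_ne _ h, smul_eq_mul]
    simp [Matrix.diagonal_apply_ne _ h]

lemma weight_eq {k : ℕ} {a b : Fin k} (hab : a ≠ b) {q : ℝ} {x y : Fin k → Fin 2}
    (h : embedPair k a b q x y ≠ 0) : (∑ l, (x l).val) = ∑ l, (y l).val := by
  rw [embedPair] at h
  split_ifs at h with hcond
  · -- xyBlock nonzero forces pairs in {(0,1),(1,0)}
    have hx : (x a, x b) = ((0:Fin 2), (1:Fin 2)) ∨ (x a, x b) = (1, 0) := by
      by_contra hc
      push_neg at hc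
      rw [xyBlock] at h
      simp [hc.1, hc.2] at h
    have hy : (y a, y b) = ((0:Fin 2), (1:Fin 2)) ∨ (y a, y b) = (1, 0) := by
      by_contra hc
      push_neg at hc
      rw [xyBlock] at h
      simp [hc.1, hc.2] at h
    have hxab : (x a).val + (x b).val = 1 := by
      rcases hx with h' | h' <;> rw [Prod.mk.injEq] at h' <;> simp [h'.1, h'.2]
    have hyab : (y a).val + (y b).val = 1 := by
      rcases hy with h' | h' <;> rw [Prod.mk.injEq] at h' <;> simp [h'.1, h'.2]
    have hsub : ({a, b} : Finset (Fin k)) ⊆ Finset.univ := Finset.subset_univ _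
    rw [← Finset.sum_sdiff hsub, ← Finset.sum_sdiff hsub (f := fun l => (y l).val)]
    have hrest : ∑ l ∈ Finset.univ \ {a, b}, (x l).val
        = ∑ l ∈ Finset.univ \ {a, b}, (y l).val := by
      refine Finset.sum_congr rfl fun l hl => ?_
      simp only [Finset.mem_sdiff, Finset.mem_insert, Finset.mem_singleton] at hl
      rw [hcond l (fun h => hl.2 (Or.inl h)) (fun h => hl.2 (Or.inr h))]
    have hpair : ∑ l ∈ ({a, b} : Finset (Fin k)), (x l).val
        = ∑ l ∈ ({a, b} : Finset (Fin k)), (y l).val := by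
      rw [Finset.sum_pair hab, Finset.sum_pair hab, hxab, hyab]
    rw [hrest, hpair]
  · exact absurd rfl h

lemma embed_comm {k : ℕ} {a b : Fin k} (hab : a ≠ b) (q : ℝ) :
    embedPair k a b q * numOp k = numOp k * embedPair k a b q := by
  rw [numOp_eq]
  ext x y
  rw [Matrix.mul_diagonal, Matrix.diagonal_mul]
  by_cases h : embedPair k a b q x y = 0
  · simp [h]
  · rw [weight_eq hab h, mul_comm]

/-- Each embedded warm-started XY-block `ℋ_{ab}(q)` (for
distinct `a, b` and `0 < q < 1`) commutes with the number operator `𝒩`;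
consequently any real linear combination `∑ c_{ab} ℋ_{ab}(q_{ab})` commutes
with `𝒩` and preserves every fixed-Hamming-weight subspace of `(ℂ²)^⊗k`. -/
theorem statement5 (k : ℕ) (hk : 2 ≤ k) :
    (∀ a b : Fin k, a ≠ b → ∀ q : ℝ, 0 < q → q < 1 →
      embedPair k a b q * numOp k = numOp k * embedPair k a b q) ∧
    (∀ (c : Fin k → Fin k → ℝ) (qf : Fin k → Fin k → ℝ),
      (∀ a b, a ≠ b → 0 < qf a b ∧ qf a b < 1) →
      ∀ S : Matrix (Fin k → Fin 2) (Fin k → Fin 2) ℂ,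
      S = ∑ a, ∑ b, (if a ≠ b then ((c a b : ℂ) • embedPair k a b (qf a b)) else 0) →
      S * numOp k = numOp k * S ∧
      ∀ (w : ℕ) (v : (Fin k → Fin 2) → ℂ),
        (∀ x : Fin k → Fin 2, (∑ l, (x l).val) ≠ w → v x = 0) →
        (∀ x : Fin k → Fin 2, (∑ l, (x l).val) ≠ w → S.mulVec v x = 0)) := by
  constructor
  · intro a b hab q _ _
    exact embed_comm hab q
  · intro c qf _ S hS
    have hcomm : S * numOp k = numOp k * S := by
      subst hS
      rw [Finset.sum_mul, Finset.mul_sum]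
      refine Finset.sum_congr rfl fun a _ => ?_
      rw [Finset.sum_mul, Finset.mul_sum]
      refine Finset.sum_congr rfl fun b _ => ?_
      split_ifs with hab
      · rw [smul_mul_assoc, mul_smul_comm, embed_comm hab]
      · simp
    refine ⟨hcomm, fun w v hv x hx => ?_⟩
    have hentry : ∀ x y : Fin k → Fin 2,
        (∑ l, (x l).val) ≠ (∑ l, (y l).val) → S x y = 0 := by
      intro x y hne
      have := congrFun (congrFun hcomm x) y
      rw [numOp_eq, Matrix.mul_diagonal, Matrix.diagonal_mul] at this
      have hc : ((∑ l, (y l).val : ℕ) : ℂ) ≠ ((∑ l, (x l).val : ℕ) : ℂ) := by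
        exact_mod_cast Ne.symm hne
      have h2 : S x y * (((∑ l, (y l).val : ℕ) : ℂ) - ((∑ l, (x l).val : ℕ) : ℂ)) = 0 := by
        linear_combination this
      rcases mul_eq_zero.mp h2 with h | h
      · exact h
      · exact absurd (sub_eq_zero.mp h) hc
    rw [Matrix.mulVec, dotProduct]
    refine Finset.sum_eq_zero fun y _ => ?_
    by_cases hy : (∑ l, (y l).val) = w
    · rw [hentry x y (hy ▸ hx), zero_mul]
    · rw [hv y hy, mul_zero]
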